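/- Under the hypotheses of the Hadamard reparameterization theorem, the normalization constants satisfy 1/Z = (1/Z_π) · (√(π/(2βλ)))ᵈ. -/

import Mathlib

/-!
Substituting `x = u ⊙ v` for fixed `u > 0` (Jacobian `∏ uᵢ`) and exchanging the integrals writes
`Z_π` as `∫ e^{-βG(x)} ∏ᵢ (∫₀^∞ exp (-a (uᵢ² + (xᵢ/uᵢ)²)) duᵢ) dx` with `a = βλ/2`.
For `b > 0` the substitution `t = u - b/u` maps `(0, ∞)` onto `ℝ`, with
`a t² = a (u² + (b/u)²) - 2ab` and `dt = (1 + b/u²) du`, while the involution `u ↦ b/u` shows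
that the `b/u²` part contributes as much as the `1` part; hence
`∫₀^∞ exp (-a (u² + (b/u)²)) du = √(π/a)/2 · e^{-2ab}`. As `2a|xᵢ| = βλ|xᵢ|`, this gives
`Z_π = (√(π/(2βλ)))ᵈ Z`.
-/

open MeasureTheory Real Set
open scoped ENNReal

lemma hasDerivAt_const_div {c u : ℝ} (hu : u ≠ 0) :
    HasDerivAt (fun u => c / u) (-(c / u ^ 2)) u := by
  simpa [div_eq_mul_inv] using (hasDerivAt_inv hu).const_mul c

lemma lintegral_Ioi_comp_const_div {c : ℝ} (hc : 0 < c) (g : ℝ → ℝ≥0∞) :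
    ∫⁻ u in Ioi 0, g u = ∫⁻ u in Ioi 0, ENNReal.ofReal (c / u ^ 2) * g (c / u) := by
  have himage : (fun u => c / u) '' Ioi 0 = Ioi 0 := by
    refine Subset.antisymm (image_subset_iff.2 fun u hu => div_pos hc hu) fun y hy => ?_
    exact ⟨c / y, div_pos hc hy, div_div_cancel₀ hc.ne'⟩
  have hinj : InjOn (fun u => c / u) (Ioi 0) := fun u _ v _ h => by
    simpa [div_eq_mul_inv, hc.ne'] using h
  conv_lhs => rw [← himage]
  rw [lintegral_image_eq_lintegral_abs_deriv_mul measurableSet_Ioi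
    (fun u hu => (hasDerivAt_const_div (ne_of_gt hu)).hasDerivWithinAt) hinj]
  refine setLIntegral_congr_fun measurableSet_Ioi fun u hu => ?_
  rw [abs_neg, abs_of_pos (div_pos hc (pow_pos hu 2))]

lemma strictMonoOn_sub_const_div {b : ℝ} (hb : 0 < b) :
    StrictMonoOn (fun u => u - b / u) (Ioi 0) := fun u hu v _ huv => by
  have : b / v < b / u := div_lt_div_of_pos_left hb hu huv
  simp only
  linarith

lemma image_sub_const_div_Ioi {b : ℝ} (hb : 0 < b) :
    (fun u => u - b / u) '' Ioi 0 = univ := by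
  refine eq_univ_of_forall fun y => ?_
  set s := √(y ^ 2 + 4 * b)
  have hs : s ^ 2 = y ^ 2 + 4 * b := sq_sqrt (by positivity)
  have hys : -y < s := calc
    -y ≤ |y| := neg_le_abs y
    _ = √(y ^ 2) := (Real.sqrt_sq_eq_abs y).symm
    _ < s := Real.sqrt_lt_sqrt (sq_nonneg y) (by linarith)
  have hu : 0 < (y + s) / 2 := by linarith
  refine ⟨(y + s) / 2, hu, ?_⟩
  have hys' : y + s ≠ 0 := by linarith
  field_simp
  linear_combination hs

lemma integrable_exp_neg_mul_sq_add_div_sq {a : ℝ} (ha : 0 < a) (c : ℝ) :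
    Integrable (fun u => exp (-a * (u ^ 2 + (c / u) ^ 2))) := by
  refine (integrable_exp_neg_mul_sq ha).mono' (by fun_prop) (ae_of_all _ fun u => ?_)
  rw [norm_of_nonneg (exp_pos _).le, exp_le_exp]
  nlinarith [sq_nonneg (c / u)]

lemma lintegral_gaussian {a : ℝ} (ha : 0 < a) :
    ∫⁻ t, ENNReal.ofReal (exp (-a * t ^ 2)) = ENNReal.ofReal √(π / a) := by
  rw [← ofReal_integral_eq_lintegral_ofReal (integrable_exp_neg_mul_sq ha)
    (ae_of_all _ fun _ => (exp_pos _).le), integral_gaussian]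

section Glasser

variable {a b : ℝ}

lemma lintegral_Ioi_div_sq_mul_exp_neg_mul_sq_add_div_sq (hb : 0 < b) :
    ∫⁻ u in Ioi 0, ENNReal.ofReal (b / u ^ 2) * ENNReal.ofReal (exp (-a * (u ^ 2 + (b / u) ^ 2)))
      = ∫⁻ u in Ioi 0, ENNReal.ofReal (exp (-a * (u ^ 2 + (b / u) ^ 2))) := by
  rw [lintegral_Ioi_comp_const_div hb fun u => ENNReal.ofReal (exp (-a * (u ^ 2 + (b / u) ^ 2)))]
  refine setLIntegral_congr_fun measurableSet_Ioi fun u hu => ?_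
  have hinv : (b / u) ^ 2 + (b / (b / u)) ^ 2 = u ^ 2 + (b / u) ^ 2 := by
    field_simp [hb.ne', (mem_Ioi.1 hu).ne']
    ring
  rw [hinv]

lemma lintegral_Ioi_one_add_div_sq_mul_exp_neg_mul_sq_add_div_sq (ha : 0 < a) (hb : 0 < b) :
    ENNReal.ofReal (exp (2 * a * b)) * ∫⁻ u in Ioi 0, (1 + ENNReal.ofReal (b / u ^ 2)) *
        ENNReal.ofReal (exp (-a * (u ^ 2 + (b / u) ^ 2)))
      = ENNReal.ofReal √(π / a) := by
  have hderiv : ∀ u ∈ Ioi (0 : ℝ),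
      HasDerivWithinAt (fun u => u - b / u) (1 + b / u ^ 2) (Ioi 0) u := fun u hu =>
    (((hasDerivAt_id' u).sub (hasDerivAt_const_div (ne_of_gt hu))).congr_deriv
      (sub_neg_eq_add _ _)).hasDerivWithinAt
  have hsq : ∀ u ≠ 0,
      exp (-a * (u - b / u) ^ 2) = exp (2 * a * b) * exp (-a * (u ^ 2 + (b / u) ^ 2)) := by
    intro u hu
    rw [← exp_add]
    congr 1
    field_simp
    ring
  have hsub := lintegral_image_eq_lintegral_abs_deriv_mul measurableSet_Ioi hderiv
    (strictMonoOn_sub_const_div hb).injOn fun t => ENNReal.ofReal (exp (-a * t ^ 2))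
  rw [image_sub_const_div_Ioi hb, Measure.restrict_univ, lintegral_gaussian ha] at hsub
  rw [hsub, ← lintegral_const_mul' _ _ ENNReal.ofReal_ne_top]
  refine setLIntegral_congr_fun measurableSet_Ioi fun u hu => ?_
  rw [abs_of_pos (by positivity), hsq u (ne_of_gt hu), ENNReal.ofReal_mul (exp_pos _).le,
    ENNReal.ofReal_add zero_le_one (by positivity), ENNReal.ofReal_one]
  ring

lemma integral_Ioi_exp_neg_mul_sq_add_div_sq_of_pos (ha : 0 < a) (hb : 0 < b) :
    ∫ u in Ioi 0, exp (-a * (u ^ 2 + (b / u) ^ 2)) = √(π / a) / 2 * exp (-(2 * a * b)) := by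
  have hJ := ofReal_integral_eq_lintegral_ofReal
    ((integrable_exp_neg_mul_sq_add_div_sq ha b).integrableOn (s := Ioi 0))
    (ae_of_all _ fun _ => (exp_pos _).le)
  have hJ_nonneg : 0 ≤ ∫ u in Ioi 0, exp (-a * (u ^ 2 + (b / u) ^ 2)) :=
    setIntegral_nonneg measurableSet_Ioi fun _ _ => (exp_pos _).le
  have htwice := lintegral_Ioi_one_add_div_sq_mul_exp_neg_mul_sq_add_div_sq ha hb
  simp_rw [add_mul, one_mul] at htwice
  rw [lintegral_add_left (by fun_prop), lintegral_Ioi_div_sq_mul_exp_neg_mul_sq_add_div_sq hb,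
    ← hJ, ← ENNReal.ofReal_add hJ_nonneg hJ_nonneg, ← ENNReal.ofReal_mul (exp_pos _).le,
    ENNReal.ofReal_eq_ofReal_iff (by positivity) (sqrt_nonneg _)] at htwice
  rw [← htwice, exp_neg]
  field_simp
  ring

end Glasser

lemma integral_Ioi_exp_neg_mul_sq_add_div_sq {a : ℝ} (ha : 0 < a) (c : ℝ) :
    ∫ u in Ioi 0, exp (-a * (u ^ 2 + (c / u) ^ 2)) = √(π / a) / 2 * exp (-(2 * a * |c|)) := by
  rcases eq_or_ne c 0 with rfl | hc
  · simpa using integral_gaussian_Ioi a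
  · simpa only [div_pow, sq_abs] using
      integral_Ioi_exp_neg_mul_sq_add_div_sq_of_pos ha (abs_pos.2 hc)

lemma setLIntegral_univ_pi_ofReal_prod {ι : Type*} [Fintype ι] {s : Set ℝ} {f : ι → ℝ → ℝ}
    (hf : ∀ i, IntegrableOn (f i) s) (hf_nonneg : ∀ i t, 0 ≤ f i t) :
    ∫⁻ u in univ.pi fun _ => s, ENNReal.ofReal (∏ i, f i (u i))
      = ENNReal.ofReal (∏ i, ∫ t in s, f i t) := by
  rw [volume_pi, Measure.restrict_pi_pi, ← integral_fintype_prod_eq_prod,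
    ofReal_integral_eq_lintegral_ofReal (Integrable.fintype_prod hf)
      (ae_of_all _ fun u => Finset.prod_nonneg fun i _ => hf_nonneg i (u i))]

lemma setLIntegral_univ_pi_Ioi_exp_neg_mul_sum_sq_add_div_sq {ι : Type*} [Fintype ι] {a : ℝ}
    (ha : 0 < a) (x : ι → ℝ) :
    ∫⁻ u in univ.pi fun _ => Ioi 0, ENNReal.ofReal (exp (-a * ∑ i, (u i ^ 2 + (x i / u i) ^ 2)))
      = ENNReal.ofReal ((√(π / a) / 2) ^ Fintype.card ι * exp (-(2 * a * ∑ i, |x i|))) := by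
  simp_rw [Finset.mul_sum, exp_sum]
  rw [setLIntegral_univ_pi_ofReal_prod
    (fun i => (integrable_exp_neg_mul_sq_add_div_sq ha (x i)).integrableOn)
    (fun _ _ => (exp_pos _).le)]
  simp_rw [integral_Ioi_exp_neg_mul_sq_add_div_sq ha, Finset.prod_mul_distrib, Finset.prod_const,
    ← exp_sum, Finset.sum_neg_distrib, Finset.card_univ]

lemma lintegral_comp_pi_mul_left {ι : Type*} [Fintype ι] {u : ι → ℝ} (hu : ∀ i, u i ≠ 0)
    {g : (ι → ℝ) → ℝ≥0∞} (hg : Measurable g) :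
    ∫⁻ v, g (u * v) = ENNReal.ofReal |(∏ i, u i)⁻¹| * ∫⁻ x, g x := by
  classical
  have hL : ⇑(Matrix.toLin' (Matrix.diagonal u)) = (u * ·) := by
    ext v i
    simp [Matrix.toLin'_apply, Matrix.mulVec_diagonal]
  have hdet : (Matrix.diagonal u).det ≠ 0 := by
    simpa [Matrix.det_diagonal, Finset.prod_ne_zero_iff] using hu
  have hmap := Real.map_matrix_volume_pi_eq_smul_volume_pi hdet
  rw [hL, Matrix.det_diagonal] at hmap
  rw [← lintegral_map hg (by fun_prop), hmap, lintegral_smul_measure, smul_eq_mul]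

theorem setLIntegral_gaussian_comp_mul_eq_laplace {ι : Type*} [Fintype ι] {a : ℝ} (ha : 0 < a)
    {h : (ι → ℝ) → ℝ≥0∞} (hh : Measurable h) :
    ∫⁻ p in {p : (ι → ℝ) × (ι → ℝ) | ∀ i, 0 < p.1 i},
        ENNReal.ofReal ((∏ i, p.1 i) * exp (-a * ∑ i, (p.1 i ^ 2 + p.2 i ^ 2))) * h (p.1 * p.2)
      = ENNReal.ofReal ((√(π / a) / 2) ^ Fintype.card ι) *
        ∫⁻ x, ENNReal.ofReal (exp (-(2 * a * ∑ i, |x i|))) * h x := by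
  set T := univ.pi fun _ : ι => Ioi (0 : ℝ)
  have hT : MeasurableSet T := MeasurableSet.univ_pi fun _ => measurableSet_Ioi
  have hS : {p : (ι → ℝ) × (ι → ℝ) | ∀ i, 0 < p.1 i} = T ×ˢ univ := by
    ext p
    simp [T, Set.mem_pi]
  have hfiber : ∀ u ∈ T, ∫⁻ v, ENNReal.ofReal ((∏ i, u i) *
        exp (-a * ∑ i, (u i ^ 2 + v i ^ 2))) * h (u * v)
      = ∫⁻ x, ENNReal.ofReal (exp (-a * ∑ i, (u i ^ 2 + (x i / u i) ^ 2))) * h x := by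
    intro u hu
    have hu : ∀ i, 0 < u i := fun i => hu i (mem_univ i)
    have hprod : 0 < ∏ i, u i := Finset.prod_pos fun i _ => hu i
    have hcomp := lintegral_comp_pi_mul_left (fun i => (hu i).ne')
      (g := fun x => ENNReal.ofReal ((∏ i, u i) *
        exp (-a * ∑ i, (u i ^ 2 + (x i / u i) ^ 2))) * h x) (by fun_prop)
    have hcancel : ∀ (v : ι → ℝ) i, u i * v i / u i = v i := fun v i =>
      mul_div_cancel_left₀ _ (hu i).ne'
    simp only [Pi.mul_apply, hcancel] at hcomp
    rw [hcomp, ← lintegral_const_mul' _ _ ENNReal.ofReal_ne_top]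
    refine lintegral_congr fun x => ?_
    rw [← mul_assoc, ← ENNReal.ofReal_mul (abs_nonneg _), abs_of_pos (inv_pos.2 hprod),
      inv_mul_cancel_left₀ hprod.ne']
  calc _ = ∫⁻ u in T, ∫⁻ v, ENNReal.ofReal ((∏ i, u i) *
        exp (-a * ∑ i, (u i ^ 2 + v i ^ 2))) * h (u * v) := by
        rw [hS, Measure.volume_eq_prod, ← Measure.prod_restrict, Measure.restrict_univ,
          lintegral_prod _ (by fun_prop)]
    _ = ∫⁻ u in T, ∫⁻ x, ENNReal.ofReal (exp (-a * ∑ i, (u i ^ 2 + (x i / u i) ^ 2))) * h x :=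
        setLIntegral_congr_fun hT hfiber
    _ = ∫⁻ x, ∫⁻ u in T, ENNReal.ofReal (exp (-a * ∑ i, (u i ^ 2 + (x i / u i) ^ 2))) * h x :=
        lintegral_lintegral_swap (by fun_prop)
    _ = _ := by
        rw [← lintegral_const_mul' _ _ ENNReal.ofReal_ne_top]
        refine lintegral_congr fun x => ?_
        rw [lintegral_mul_const _ (by fun_prop),
          setLIntegral_univ_pi_Ioi_exp_neg_mul_sum_sq_add_div_sq ha,
          ENNReal.ofReal_mul (by positivity), mul_assoc]

theorem normalization_constants_general (d : ℕ) (β lam : ℝ) (hβ : 0 < β) (hlam : 0 < lam)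
    (G : (Fin d → ℝ) → ℝ) (hG : Measurable G)
    (Z Zπ : ℝ)
    (hZ : Z = ∫ x : Fin d → ℝ, Real.exp (-β * (lam * ∑ i, |x i| + G x)))
    (hZπ : Zπ = ∫ p in {p : (Fin d → ℝ) × (Fin d → ℝ) | ∀ i, 0 < p.1 i},
        (∏ i, p.1 i) *
          Real.exp (-β * (lam / 2 * ((∑ i, p.1 i ^ 2) + ∑ i, p.2 i ^ 2) +
            G (fun i => p.1 i * p.2 i)))) :
    1 / Z = (1 / Zπ) * (Real.sqrt (Real.pi / (2 * β * lam))) ^ d := by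
  have hS : MeasurableSet {p : (Fin d → ℝ) × (Fin d → ℝ) | ∀ i, 0 < p.1 i} := by
    simpa only [ofPred_forall] using MeasurableSet.iInter fun i =>
      measurableSet_lt measurable_const (by fun_prop)
  have hsqrt : √(π / (β * lam / 2)) / 2 = √(π / (2 * β * lam)) := by
    rw [show π / (2 * β * lam) = π / (β * lam / 2) / 2 ^ 2 by field_simp,
      sqrt_div' (π / (β * lam / 2)) (sq_nonneg 2), sqrt_sq zero_le_two]
  have hlaplace : ∀ x : Fin d → ℝ, ENNReal.ofReal (exp (-β * (lam * ∑ i, |x i| + G x)))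
      = ENNReal.ofReal (exp (-(2 * (β * lam / 2) * ∑ i, |x i|))) *
        ENNReal.ofReal (exp (-β * G x)) := fun x => by
    rw [← ENNReal.ofReal_mul (exp_pos _).le, ← exp_add]
    ring_nf
  have hgauss : ∀ p : (Fin d → ℝ) × (Fin d → ℝ), ENNReal.ofReal ((∏ i, p.1 i) *
        exp (-β * (lam / 2 * ((∑ i, p.1 i ^ 2) + ∑ i, p.2 i ^ 2) + G (fun i => p.1 i * p.2 i))))
      = ENNReal.ofReal ((∏ i, p.1 i) * exp (-(β * lam / 2) * ∑ i, (p.1 i ^ 2 + p.2 i ^ 2))) *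
        ENNReal.ofReal (exp (-β * G (p.1 * p.2))) := fun p => by
    rw [← ENNReal.ofReal_mul' (exp_pos _).le, mul_assoc, ← exp_add, Finset.sum_add_distrib]
    ring_nf
    rfl
  have hZπZ : Zπ = √(π / (2 * β * lam)) ^ d * Z := by
    rw [hZπ, hZ, integral_eq_lintegral_of_nonneg_ae (ae_of_all _ fun _ => (exp_pos _).le)
      (by fun_prop), integral_eq_lintegral_of_nonneg_ae ?_ (by fun_prop)]
    · simp_rw [hgauss, hlaplace]
      rw [setLIntegral_gaussian_comp_mul_eq_laplace (h := fun x => ENNReal.ofReal (exp (-β * G x)))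
          (by positivity) (by fun_prop),
        ENNReal.toReal_mul, ENNReal.toReal_ofReal (by positivity), Fintype.card_fin, hsqrt]
    · exact ae_restrict_of_forall_mem hS fun p hp =>
        mul_nonneg (Finset.prod_nonneg fun i _ => (hp i).le) (exp_pos _).le
  have hq : √(π / (2 * β * lam)) ^ d ≠ 0 := by positivity
  rw [hZπZ, one_div_mul_eq_div, div_mul_cancel_left₀ hq, one_div]

/-- Relation between the normalization constants of ρ and π. -/
theorem normalization_constants (d : ℕ) (β lam : ℝ) (hβ : 0 < β) (hlam : 0 < lam)
    (G : (Fin d → ℝ) → ℝ) (hG : Measurable G) (C : ℝ) (hGb : ∀ x, C ≤ G x)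
    (Z Zπ : ℝ)
    (hZ : Z = ∫ x : Fin d → ℝ, Real.exp (-β * (lam * ∑ i, |x i| + G x)))
    (hZπ : Zπ = ∫ p in {p : (Fin d → ℝ) × (Fin d → ℝ) | ∀ i, 0 < p.1 i},
        (∏ i, p.1 i) *
          Real.exp (-β * (lam / 2 * ((∑ i, p.1 i ^ 2) + ∑ i, p.2 i ^ 2) +
            G (fun i => p.1 i * p.2 i)))) :
    1 / Z = (1 / Zπ) * (Real.sqrt (Real.pi / (2 * β * lam))) ^ d :=
  normalization_constants_general d β lam hβ hlam G hG Z Zπ hZ hZπ
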